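/- arXiv:math/0207079 — 4 statements merged into one kernel-verified Lean document; each statement's English description precedes it below -/
import Mathlib

section
/- Let D be a digraph on n vertices whose adjacency matrix has the property that any two distinct rows are either identical or orthogonal (as 0-1 vectors), any two distinct columns are either identical or orthogonal, and every row and every column has exactly r ones (r ≥ 1). Then D is the pattern of a unitary matrix, i.e., there exists an n×n unitary matrix U such that U_{uv} ≠ 0 if and only if (u,v) is an arc of D. -/
/-!
The arcs of `D` split into disjoint `r × r` all-ones blocks: the rows of a block form a class of
identical rows, its columns a class of identical columns, and both classes have exactly `r`
elements. Numbering the members of each row class and of each column class by `Fin r`, and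
placing on every block the same `r × r` unitary matrix with no zero entry (the normalised
Fourier matrix of `ZMod r`), gives a matrix with pattern `D` whose columns are orthonormal:
columns in different classes have disjoint supports, and two columns of the same class meet
exactly in the rows of one block, where they are two columns of the Fourier matrix.
-/

open Finset Matrix

namespace ZMod

variable {N : ℕ} [NeZero N]

lemma star_stdAddChar (j : ZMod N) : star (stdAddChar j) = stdAddChar (-j) := by
  rw [stdAddChar_apply, stdAddChar_apply, AddChar.map_neg_eq_inv, Circle.coe_inv_eq_conj]
  rfl

noncomputable def fourierMatrix (N : ℕ) [NeZero N] : Matrix (ZMod N) (ZMod N) ℂ :=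
  of fun j k => ((√N : ℝ) : ℂ)⁻¹ * stdAddChar (j * k)

lemma fourierMatrix_mem_unitaryGroup : fourierMatrix N ∈ unitaryGroup (ZMod N) ℂ := by
  rw [mem_unitaryGroup_iff']
  ext a b
  have hN : ((√N : ℝ) : ℂ)⁻¹ * ((√N : ℝ) : ℂ)⁻¹ = (N : ℂ)⁻¹ := by
    rw [← mul_inv, ← Complex.ofReal_mul, Real.mul_self_sqrt N.cast_nonneg,
      Complex.ofReal_natCast]
  calc (star (fourierMatrix N) * fourierMatrix N) a b
      = ∑ j, (N : ℂ)⁻¹ * stdAddChar (j * (b - a)) := by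
        refine sum_congr rfl fun j _ => ?_
        simp only [fourierMatrix, star_apply, of_apply, star_mul', star_stdAddChar,
          Complex.star_def, Complex.conj_ofReal, map_inv₀]
        rw [mul_mul_mul_comm, hN, ← AddChar.map_add_eq_mul]
        ring_nf
    _ = (1 : Matrix (ZMod N) (ZMod N) ℂ) a b := by
        rw [← mul_sum, AddChar.sum_mulShift _ (isPrimitive_stdAddChar N), one_apply, ZMod.card]
        by_cases h : a = b
        · simp [h, NeZero.ne]
        · simp [sub_eq_zero, Ne.symm h, h]

lemma fourierMatrix_ne_zero (j k : ZMod N) : fourierMatrix N j k ≠ 0 := by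
  simp [fourierMatrix, stdAddChar_apply, NeZero.ne]

end ZMod

lemma exists_unitary_forall_ne_zero (r : ℕ) :
    ∃ F : Matrix (Fin r) (Fin r) ℂ, F ∈ unitaryGroup (Fin r) ℂ ∧ ∀ i j, F i j ≠ 0 := by
  rcases Nat.eq_zero_or_pos r with rfl | hr
  · exact ⟨1, one_mem _, fun i => i.elim0⟩
  have : NeZero r := ⟨hr.ne'⟩
  let e : Fin r ≃ ZMod r := (ZMod.finEquiv r).toEquiv
  refine ⟨(ZMod.fourierMatrix r).submatrix e e, ?_, fun i j => ZMod.fourierMatrix_ne_zero _ _⟩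
  rw [mem_unitaryGroup_iff', star_eq_conjTranspose, conjTranspose_submatrix,
    submatrix_mul_equiv, ← star_eq_conjTranspose,
    mem_unitaryGroup_iff'.mp ZMod.fourierMatrix_mem_unitaryGroup, submatrix_one_equiv]

section FiberIndex

variable {α γ : Type*} [Fintype α] [LinearOrder α] [DecidableEq γ]

def fiberIndex (f : α → γ) (a : α) : ℕ := #{x | f x = f a ∧ x < a}

lemma fiberIndex_lt_card (f : α → γ) (a : α) : fiberIndex f a < #{x | f x = f a} :=
  card_lt_card ⟨monotone_filter_right _ fun _ _ h => h.1, fun h => by simpa using h (x := a)⟩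

lemma strictMonoOn_fiberIndex (f : α → γ) (a : α) :
    StrictMonoOn (fiberIndex f) {x | f x = f a} := by
  intro x hx y hy hxy
  refine card_lt_card ⟨fun z hz => ?_, fun h => ?_⟩
  · simp only [mem_filter, mem_univ, true_and] at hz ⊢
    exact ⟨hz.1.trans (hx.trans hy.symm), hz.2.trans hxy⟩
  · simpa [hx.trans hy.symm, hxy] using h (x := x)

lemma exists_bijOn_fiber (f : α → γ) {r : ℕ} (hf : ∀ a, #{x | f x = f a} = r) :
    ∃ σ : α → Fin r, ∀ a, Set.BijOn σ {x | f x = f a} Set.univ := by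
  let σ : α → Fin r := fun a => ⟨fiberIndex f a, hf a ▸ fiberIndex_lt_card f a⟩
  refine ⟨σ, fun a => ?_⟩
  have hinj : Set.InjOn σ {x | f x = f a} :=
    fun x hx y hy hxy => (strictMonoOn_fiberIndex f a).injOn hx hy (Fin.mk.inj_iff.mp hxy)
  refine ⟨Set.mapsTo_univ _ _, hinj, ?_⟩
  rw [← coe_filter_univ, ← coe_univ]
  exact surjOn_of_injOn_of_card_le _ (fun _ _ => mem_univ _) (by rwa [coe_filter_univ])
    (by rw [card_univ, Fintype.card_fin, hf a])

end FiberIndex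

section Pattern

variable {α β κ : Type*} (A : α → β → Prop)

lemma col_iff_row_eq
    (hrows : ∀ u u' : α, u ≠ u' → (∀ w, A u w ↔ A u' w) ∨ (∀ w, ¬(A u w ∧ A u' w)))
    {u : α} {v : β} (huv : A u v) (u' : α) : A u' v ↔ A u' = A u := by
  refine ⟨fun hu'v => ?_, fun h => h ▸ huv⟩
  rcases eq_or_ne u' u with rfl | hne
  · rfl
  · exact funext fun w => propext <|
      ((hrows u' u hne).resolve_right fun h => h v ⟨hu'v, huv⟩) w

variable [∀ u v, Decidable (A u v)]

/-- Row classes are the fibres of `A`, and each column support is one of them. -/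
lemma exists_bijOn_col [Fintype α] [Fintype β] [LinearOrder α] {r : ℕ} (hr : 1 ≤ r)
    (hrows : ∀ u u' : α, u ≠ u' → (∀ w, A u w ↔ A u' w) ∨ (∀ w, ¬(A u w ∧ A u' w)))
    (hout : ∀ u, #{v | A u v} = r) (hin : ∀ v, #{u | A u v} = r) :
    ∃ σ : α → Fin r, ∀ v, Set.BijOn σ {u | A u v} Set.univ := by
  classical
  have hcol_nonempty (v : β) : ∃ u, A u v := by
    obtain ⟨u, hu⟩ := card_pos.mp (hr.trans_eq (hin v).symm)
    exact ⟨u, (mem_filter.mp hu).2⟩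
  have hfiber (u : α) : #{u' | A u' = A u} = r := by
    obtain ⟨v, hv⟩ := card_pos.mp (hr.trans_eq (hout u).symm)
    replace hv : A u v := (mem_filter.mp hv).2
    rw [← hin v]
    exact congrArg card (filter_congr fun u' _ => (col_iff_row_eq A hrows hv u').symm)
  obtain ⟨σ, hσ⟩ := exists_bijOn_fiber A hfiber
  refine ⟨σ, fun v => ?_⟩
  obtain ⟨u, hu⟩ := hcol_nonempty v
  simpa only [col_iff_row_eq A hrows hu] using hσ u

def patternMatrix (F : Matrix κ κ ℂ) (σ : α → κ) (τ : β → κ) : Matrix α β ℂ :=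
  of fun u v => if A u v then F (σ u) (τ v) else 0

lemma patternMatrix_ne_zero_iff {F : Matrix κ κ ℂ} (hF : ∀ i j, F i j ≠ 0) (σ : α → κ)
    (τ : β → κ) (u : α) (v : β) : patternMatrix A F σ τ u v ≠ 0 ↔ A u v := by
  by_cases h : A u v <;> simp [patternMatrix, h, hF]

lemma conjTranspose_mul_patternMatrix [Fintype α] [Fintype κ] [DecidableEq κ] [DecidableEq β]
    {F : Matrix κ κ ℂ} (hF : Fᴴ * F = 1) {σ : α → κ} {τ : β → κ}
    (hcols : ∀ v v' : β, v ≠ v' → (∀ u, A u v ↔ A u v') ∨ (∀ u, ¬(A u v ∧ A u v')))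
    (hσ : ∀ v, Set.BijOn σ {u | A u v} Set.univ) (hτ : ∀ u, Set.InjOn τ {v | A u v}) :
    (patternMatrix A F σ τ)ᴴ * patternMatrix A F σ τ = 1 := by
  ext v v'
  rw [mul_apply, one_apply]
  by_cases hvv' : ∀ u, A u v ↔ A u v'
  · have hτvv' : τ v = τ v' ↔ v = v' := by
      refine ⟨fun h => ?_, congrArg τ⟩
      obtain ⟨u, hu, -⟩ := (hσ v).surjOn (Set.mem_univ (τ v))
      exact hτ u hu ((hvv' u).mp hu) h
    calc ∑ u, (patternMatrix A F σ τ)ᴴ v u * patternMatrix A F σ τ u v'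
        = ∑ u with A u v, star (F (σ u) (τ v)) * F (σ u) (τ v') := by
          rw [sum_filter]
          refine sum_congr rfl fun u _ => ?_
          by_cases hu : A u v <;> simp [patternMatrix, hu, (hvv' u).mp]
      _ = ∑ k, star (F k (τ v)) * F k (τ v') := by
          refine sum_nbij σ (fun _ _ => mem_univ _) ?_ ?_ fun _ _ => rfl
          · rw [coe_filter_univ]; exact (hσ v).injOn
          · rw [coe_filter_univ, coe_univ]; exact (hσ v).surjOn
      _ = (Fᴴ * F) (τ v) (τ v') := by rw [mul_apply]; rfl
      _ = if v = v' then 1 else 0 := by rw [hF, one_apply]; exact if_congr hτvv' rfl rfl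
  · have hne : v ≠ v' := by rintro rfl; exact hvv' fun _ => Iff.rfl
    have hdisj := (hcols v v' hne).resolve_left hvv'
    rw [if_neg hne]
    refine sum_eq_zero fun u _ => ?_
    by_cases hu : A u v
    · have hu' : ¬A u v' := fun h => hdisj u ⟨hu, h⟩
      simp [patternMatrix, hu']
    · simp [patternMatrix, hu]

end Pattern

theorem richards_regular_pattern_unitary {n r : ℕ} (hr : 1 ≤ r)
    (A : Fin n → Fin n → Prop) [∀ u v, Decidable (A u v)]
    (hrows : ∀ u v : Fin n, u ≠ v →
      (∀ w, A u w ↔ A v w) ∨ (∀ w, ¬(A u w ∧ A v w)))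
    (hcols : ∀ u v : Fin n, u ≠ v →
      (∀ w, A w u ↔ A w v) ∨ (∀ w, ¬(A w u ∧ A w v)))
    (hout : ∀ u : Fin n, (Finset.univ.filter fun v => A u v).card = r)
    (hin : ∀ v : Fin n, (Finset.univ.filter fun u => A u v).card = r) :
    ∃ U : Matrix (Fin n) (Fin n) ℂ,
      U ∈ Matrix.unitaryGroup (Fin n) ℂ ∧ ∀ u v, U u v ≠ 0 ↔ A u v := by
  obtain ⟨σ, hσ⟩ := exists_bijOn_col A hr hrows hout hin
  obtain ⟨τ, hτ⟩ := exists_bijOn_col (fun v u => A u v) hr hcols hin hout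
  obtain ⟨F, hF, hF_ne_zero⟩ := exists_unitary_forall_ne_zero r
  refine ⟨patternMatrix A F σ τ, ?_, patternMatrix_ne_zero_iff A hF_ne_zero σ τ⟩
  exact mem_unitaryGroup_iff'.mpr <| conjTranspose_mul_patternMatrix A
    (mem_unitaryGroup_iff'.mp hF) hcols hσ fun u => (hτ u).injOn
end

section
/- Let G be a finite group generated by S, and suppose there exists x with x⁻¹ ∈ S such that xS = H is a subgroup of G with |H| = |S|. Then Cay(G,S) is isomorphic to the line digraph of some |S|-regular multidigraph. -/
structure Multidigraph (V E : Type*) where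
  tail : E → V
  head : E → V

theorem cayley_line_of_coset_subgroup {G : Type*} [Group G] [Fintype G] [DecidableEq G]
    (S : Finset G) (hS : Subgroup.closure (S : Set G) = ⊤)
    (x : G) (hx : x⁻¹ ∈ S) (H : Subgroup G)
    (hxS : (fun s => x * s) '' (S : Set G) = (H : Set G))
    (hcard : Nat.card H = S.card) :
    ∃ (V E : Type) (D : Multidigraph V E),
      (∀ v : V, Nat.card {e : E // D.tail e = v} = S.card ∧
                Nat.card {e : E // D.head e = v} = S.card) ∧
      ∃ φ : G ≃ E, ∀ g h : G,
        (∃ s ∈ S, h = g * s) ↔ D.head (φ g) = D.tail (φ h) := by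
  classical
  have hmem : ∀ g : G, g ∈ S ↔ x * g ∈ H := by
    intro g
    constructor
    · intro hg
      have : x * g ∈ (fun s => x * s) '' (S : Set G) := ⟨g, hg, rfl⟩
      rwa [hxS] at this
    · intro hg
      have hg' : x * g ∈ (fun s => x * s) '' (S : Set G) := by rw [hxS]; exact hg
      obtain ⟨s, hs, hsg⟩ := hg'
      have : s = g := mul_left_cancel hsg
      rwa [← this]
  let e : G ≃ Fin (Fintype.card G) := Fintype.equivFin G
  let q : G ⧸ H ≃ Fin (Fintype.card (G ⧸ H)) := Fintype.equivFin _
  refine ⟨Fin (Fintype.card (G ⧸ H)), Fin (Fintype.card G),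
    ⟨fun g => q (QuotientGroup.mk (e.symm g)),
     fun g => q (QuotientGroup.mk (e.symm g * x⁻¹))⟩, ?_, e, ?_⟩
  · intro v
    obtain ⟨g0, hg0⟩ : ∃ g0 : G, q (QuotientGroup.mk g0) = v := by
      obtain ⟨g0⟩ := Quotient.exists_rep (q.symm v)
      exact ⟨g0, by rw [show (QuotientGroup.mk g0 : G ⧸ H) = Quotient.mk _ g0 from rfl,
        ‹Quotient.mk _ g0 = q.symm v›, Equiv.apply_symm_apply]⟩
    have key : ∀ a b : G, q (QuotientGroup.mk a) = q (QuotientGroup.mk b) ↔ a⁻¹ * b ∈ H := by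
      intro a b
      rw [q.apply_eq_iff_eq, QuotientGroup.eq]
    constructor
    · rw [← hcard]
      refine Nat.card_congr ⟨fun p => ⟨g0⁻¹ * e.symm p.1, ?_⟩,
        fun h => ⟨e (g0 * h.1), ?_⟩, ?_, ?_⟩
      · have := (key (e.symm p.1) g0).mp (p.2.trans hg0.symm)
        simpa using (inv_mem this)
      · rw [← hg0]
        rw [key]
        simpa using (inv_mem h.2)
      · intro p
        ext
        simp
      · intro h
        ext
        simp
    · rw [← hcard]
      refine Nat.card_congr ⟨fun p => ⟨g0⁻¹ * (e.symm p.1 * x⁻¹), ?_⟩,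
        fun h => ⟨e (g0 * h.1 * x), ?_⟩, ?_, ?_⟩
      · have := (key (e.symm p.1 * x⁻¹) g0).mp (p.2.trans hg0.symm)
        simpa using (inv_mem this)
      · rw [← hg0]
        rw [key]
        have := inv_mem h.2
        simpa [mul_assoc] using this
      · intro p
        ext
        simp [mul_assoc]
      · intro h
        ext
        simp [mul_assoc]
  · intro g h
    simp only [Equiv.symm_apply_apply, q.apply_eq_iff_eq, QuotientGroup.eq]
    constructor
    · rintro ⟨s, hs, rfl⟩
      have := (hmem s).mp hs
      simpa [mul_assoc] using this
    · intro hgh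
      refine ⟨g⁻¹ * h, ?_, by group⟩
      rw [hmem]
      simpa [mul_assoc] using hgh
end

section
/- For every finite group G generated by two elements s₁, s₂, there exists a generating set T of G such that Cay(G,T) is the line digraph of an |T|-regular multidigraph (and hence the pattern of a unitary matrix). Concretely, one may take T = s₁·⟨s₁⁻¹s₂⟩, the left coset of the cyclic subgroup generated by s₁⁻¹s₂. -/
/-!
With `H = ⟨s₁⁻¹ s₂⟩` and `T = s₁ H`, both generators lie in `T`, so `T` generates `G`.
Take the multidigraph whose vertices are the left cosets `gH` and whose arcs are the elements
`g ∈ G`, the arc `g` running from `gH` to `g s₁ H`. Every coset has `|H| = |T|` elements, so each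
vertex has in- and out-degree `|T|`; and `g s₁ H = hH` iff `h ∈ g s₁ H = g T`, which is exactly
adjacency of `g` and `h` in `Cay(G, T)`.
-/

open scoped Pointwise

namespace Multidigraph

variable {V E V' E' : Type*}

def IsRegularOfDegree (D : Multidigraph V E) (k : ℕ) : Prop :=
  ∀ v : V, Nat.card {e : E // D.tail e = v} = k ∧ Nat.card {e : E // D.head e = v} = k

def IsLineDigraphOf {α : Type*} (D : Multidigraph V E) (R : α → α → Prop) : Prop :=
  ∃ φ : α ≃ E, ∀ a b, R a b ↔ D.head (φ a) = D.tail (φ b)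

def congr (D : Multidigraph V E) (eV : V ≃ V') (eE : E ≃ E') : Multidigraph V' E' where
  tail := eV ∘ D.tail ∘ eE.symm
  head := eV ∘ D.head ∘ eE.symm

theorem IsRegularOfDegree.congr {D : Multidigraph V E} {k : ℕ} (hD : D.IsRegularOfDegree k)
    (eV : V ≃ V') (eE : E ≃ E') : (D.congr eV eE).IsRegularOfDegree k := by
  intro v
  obtain ⟨htail, hhead⟩ := hD (eV.symm v)
  exact ⟨htail ▸ Nat.card_congr (eE.symm.subtypeEquiv fun _ => eV.eq_symm_apply.symm),
    hhead ▸ Nat.card_congr (eE.symm.subtypeEquiv fun _ => eV.eq_symm_apply.symm)⟩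

theorem IsLineDigraphOf.congr {α : Type*} {D : Multidigraph V E} {R : α → α → Prop}
    (hD : D.IsLineDigraphOf R) (eV : V ≃ V') (eE : E ≃ E') : (D.congr eV eE).IsLineDigraphOf R := by
  obtain ⟨φ, hφ⟩ := hD
  exact ⟨φ.trans eE, fun a b => by simp [Multidigraph.congr, hφ]⟩

theorem exists_small_of_isLineDigraphOf [Small.{0} V] [Small.{0} E] {α : Type*}
    (D : Multidigraph V E) {k : ℕ} {R : α → α → Prop} (hreg : D.IsRegularOfDegree k)
    (hline : D.IsLineDigraphOf R) :
    ∃ (V' E' : Type) (D' : Multidigraph V' E'), D'.IsRegularOfDegree k ∧ D'.IsLineDigraphOf R :=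
  ⟨_, _, D.congr (equivShrink V) (equivShrink E), hreg.congr _ _, hline.congr _ _⟩

end Multidigraph

section CosetDigraph

variable {G : Type*} [Group G]

def cosetDigraph (H : Subgroup G) (s : G) : Multidigraph (G ⧸ H) G where
  tail g := g
  head g := (g * s : G)

theorem QuotientGroup.card_fiber_mk (H : Subgroup G) (q : G ⧸ H) :
    Nat.card {g : G // (g : G ⧸ H) = q} = Nat.card H := by
  have h := QuotientGroup.card_preimage_mk H {q}
  rwa [Nat.card_unique (α := ({q} : Set (G ⧸ H))), mul_one] at h

theorem cosetDigraph_isRegularOfDegree (H : Subgroup G) (s : G) :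
    (cosetDigraph H s).IsRegularOfDegree (Nat.card H) := fun q =>
  ⟨QuotientGroup.card_fiber_mk H q,
    (Nat.card_congr ((Equiv.mulRight s).subtypeEquiv fun _ => Iff.rfl)).trans
      (QuotientGroup.card_fiber_mk H q)⟩

theorem cosetDigraph_isLineDigraphOf_cayley (H : Subgroup G) (s : G) :
    (cosetDigraph H s).IsLineDigraphOf fun g h => ∃ t ∈ s • (H : Set G), h = g * t := by
  refine ⟨Equiv.refl G, fun g h => ?_⟩
  simp only [cosetDigraph, Equiv.refl_apply, QuotientGroup.eq, Set.mem_smul_set, smul_eq_mul]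
  constructor
  · rintro ⟨_, ⟨c, hc, rfl⟩, rfl⟩
    simpa [mul_assoc] using hc
  · exact fun hmem => ⟨_, ⟨_, hmem, rfl⟩, by group⟩

end CosetDigraph

theorem Subgroup.closure_smul_zpowers_inv_mul_eq_top {G : Type*} [Group G] {a b : G}
    (h : Subgroup.closure {a, b} = ⊤) :
    Subgroup.closure (a • (Subgroup.zpowers (a⁻¹ * b) : Set G)) = ⊤ := by
  refine eq_top_mono (Subgroup.closure_mono ?_) h
  rintro _ (rfl | rfl)
  · exact ⟨1, one_mem _, mul_one _⟩
  · exact ⟨a⁻¹ * _, Subgroup.mem_zpowers _, mul_inv_cancel_left _ _⟩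

theorem two_generated_cayley_line_digraph {G : Type*} [Group G] [Fintype G]
    (s₁ s₂ : G) (hgen : Subgroup.closure ({s₁, s₂} : Set G) = ⊤) :
    ∃ T : Set G,
      T = (fun c => s₁ * c) '' (Subgroup.zpowers (s₁⁻¹ * s₂) : Set G) ∧
      Subgroup.closure T = ⊤ ∧
      ∃ (V E : Type) (D : Multidigraph V E),
        (∀ v : V, Nat.card {e : E // D.tail e = v} = Nat.card T ∧
                  Nat.card {e : E // D.head e = v} = Nat.card T) ∧
        ∃ φ : G ≃ E, ∀ g h : G,
          (∃ t ∈ T, h = g * t) ↔ D.head (φ g) = D.tail (φ h) := by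
  set H := Subgroup.zpowers (s₁⁻¹ * s₂)
  refine ⟨s₁ • (H : Set G), rfl, Subgroup.closure_smul_zpowers_inv_mul_eq_top hgen, ?_⟩
  rw [Set.natCard_smul_set]
  exact (cosetDigraph H s₁).exists_small_of_isLineDigraphOf
    (cosetDigraph_isRegularOfDegree H s₁) (cosetDigraph_isLineDigraphOf_cayley H s₁)
end

section
/- In the symmetric group S_n (n ≥ 3), let x = (1 2), and let C = ⟨(2 3 ... n)⟩ be the cyclic subgroup of order n-1 generated by the (n-1)-cycle (2 3 ... n). Then the set T = (1 2)·C contains both (1 2) and the n-cycle (1 2 ... n), generates S_n, has |T| = n-1, and satisfies x·T = C. -/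
open Equiv Equiv.Perm

/-- lift `Perm (Fin m)` to `Perm (Fin (m+1))` fixing 0, as a monoid hom. -/
def liftPerm (m : ℕ) : Perm (Fin m) →* Perm (Fin (m + 1)) where
  toFun e := Equiv.Perm.decomposeFin.symm (0, e)
  map_one' := by simp; rfl
  map_mul' a b := by
    ext i
    refine Fin.cases ?_ (fun j => ?_) i <;> simp

lemma liftPerm_injective (m : ℕ) : Function.Injective (liftPerm m) := by
  intro a b h
  have := Equiv.Perm.decomposeFin.symm.injective (h : _ = _)
  exact (Prod.mk.injEq _ _ _ _).mp this |>.2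

lemma key (m : ℕ) :
    Equiv.swap (0 : Fin (m + 1)) 1 * finRotate (m + 1) = liftPerm m (finRotate m) := by
  rw [finRotate_succ_eq_decomposeFin]
  ext i
  refine Fin.cases ?_ (fun j => ?_) i <;> simp [liftPerm]

lemma orderOf_key {m : ℕ} (hm : 2 ≤ m) :
    orderOf (Equiv.swap (0 : Fin (m + 1)) 1 * finRotate (m + 1)) = m := by
  rw [key, orderOf_injective _ (liftPerm_injective m),
    (isCycle_finRotate_of_le hm).orderOf, support_finRotate_of_le hm,
    Finset.card_univ, Fintype.card_fin]

theorem symm_group_coset_generators (n : ℕ) [NeZero n] (hn : 3 ≤ n) :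
    ∀ C : Subgroup (Equiv.Perm (Fin n)),
      C = Subgroup.zpowers ((Equiv.swap (0 : Fin n) 1) * finRotate n) →
    ∀ T : Set (Equiv.Perm (Fin n)),
      T = (fun c => (Equiv.swap (0 : Fin n) 1) * c) '' (C : Set (Equiv.Perm (Fin n))) →
      Nat.card C = n - 1 ∧
      Equiv.swap (0 : Fin n) 1 ∈ T ∧
      finRotate n ∈ T ∧
      Subgroup.closure T = ⊤ ∧
      Nat.card T = n - 1 ∧
      (fun t => (Equiv.swap (0 : Fin n) 1) * t) '' T = (C : Set (Equiv.Perm (Fin n))) := by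
  intro C hC T hT
  obtain ⟨m, rfl⟩ : ∃ m, n = m + 1 := ⟨n - 1, by omega⟩
  have hm : 2 ≤ m := by omega
  set s : Perm (Fin (m + 1)) := Equiv.swap 0 1 with hs
  set g : Perm (Fin (m + 1)) := s * finRotate (m + 1) with hg
  have hcard : Nat.card C = m := by
    rw [hC, Nat.card_zpowers, orderOf_key hm]
  have hsT : s ∈ T := by
    rw [hT]
    exact ⟨1, by simp [hC, Subgroup.one_mem], by simp⟩
  have hrT : finRotate (m + 1) ∈ T := by
    rw [hT]
    refine ⟨g, by simp [hC, Subgroup.mem_zpowers], ?_⟩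
    simp [hg, hs, ← mul_assoc, Equiv.swap_mul_self]
  refine ⟨by simpa using hcard, hsT, hrT, ?_, ?_, ?_⟩
  · rw [eq_top_iff, ← closure_cycle_adjacent_swap (isCycle_finRotate_of_le (by omega))
      (support_finRotate_of_le (by omega)) 0]
    apply Subgroup.closure_mono
    intro x hx
    rcases hx with rfl | hx
    · exact hrT
    · rw [Set.mem_singleton_iff] at hx
      subst hx
      have : finRotate (m + 1) 0 = 1 := by
        obtain ⟨k, rfl⟩ : ∃ k, m = k + 1 := ⟨m - 1, by omega⟩
        simp
      rw [this]
      exact hsT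
  · rw [hT, Nat.card_image_of_injective (mul_right_injective s)]
    simpa using hcard
  · rw [hT, ← Set.image_comp]
    have : ((fun t => s * t) ∘ fun c => s * c) = id := by
      funext x
      simp [← mul_assoc, hs]
    rw [this, Set.image_id]
end
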